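/- arXiv:1605.01384 — 2 statements merged into one kernel-verified Lean document; each statement's English description precedes it below -/
import Mathlib

section
/- Let d ≥ 1, let b : ℝ^d → ℝ^d be L-Lipschitz (L > 0), let h > 0 and x ∈ ℝ^d. On a probability space let ξ₁, ξ₂ be integrable ℝ^d-valued random vectors with E[ξ₁] = 0 and E‖ξ₁‖² = d. Define the coupled fine/coarse Euler steps x_{1/2} = x + (h/2) b(x) + √h ξ₁, x^f = x_{1/2} + (h/2) b(x_{1/2}) + √h ξ₂, and x^c = x + h b(x) + √h (ξ₁ + ξ₂). Then ‖E[x^f − x^c]‖ ≤ (h^{3/2}/2) L ( (√h/2)(L‖x‖ + ‖b(0)‖) + √d ). -/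
/-!
Driving both schemes with the same noise makes everything cancel in `x^f - x^c` except the drift
correction `(h/2) (b(x_{1/2}) - b(x))`. By the Lipschitz bound this is at most
`(h/2) L ‖x_{1/2} - x‖ ≤ (h/2) L ((h/2) ‖b x‖ + √h ‖ξ₁‖)` pointwise, and taking expectations with
`E‖ξ₁‖ ≤ √(E‖ξ₁‖²) = √d` and `‖b x‖ ≤ L ‖x‖ + ‖b 0‖` gives the bound.
-/

open MeasureTheory ProbabilityTheory

lemma integral_norm_le_sqrt_integral_norm_sq {Ω E : Type*} [MeasurableSpace Ω] {μ : Measure Ω}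
    [IsProbabilityMeasure μ] [NormedAddCommGroup E] {f : Ω → E}
    (hf : AEStronglyMeasurable f μ) (hf_sq : Integrable (fun ω => ‖f ω‖ ^ 2) μ) :
    ∫ ω, ‖f ω‖ ∂μ ≤ √(∫ ω, ‖f ω‖ ^ 2 ∂μ) := by
  have hmem : MemLp (fun ω => ‖f ω‖) 2 μ := (memLp_two_iff_integrable_sq hf.norm).2 hf_sq
  have hvar := variance_nonneg (fun ω => ‖f ω‖) μ
  rw [variance_eq_sub hmem, sub_nonneg] at hvar
  exact Real.le_sqrt_of_sq_le hvar

lemma norm_apply_le_of_lipschitz {E F : Type*} [SeminormedAddCommGroup E]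
    [SeminormedAddCommGroup F] {b : E → F} {L : ℝ} (hlip : ∀ x y, ‖b x - b y‖ ≤ L * ‖x - y‖)
    (x : E) : ‖b x‖ ≤ L * ‖x‖ + ‖b 0‖ := by
  calc ‖b x‖ ≤ ‖b 0‖ + ‖b x - b 0‖ := norm_le_norm_add_norm_sub' _ _
    _ ≤ ‖b 0‖ + L * ‖x‖ := by simpa using hlip x 0
    _ = L * ‖x‖ + ‖b 0‖ := add_comm _ _

section EulerStep

variable {E : Type*} [NormedAddCommGroup E] [NormedSpace ℝ E]

lemma two_half_steps_sub_full_step (b : E → E) (h : ℝ) {x y : E} (u v : E)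
    (hy : y = x + (h / 2) • b x + u) :
    y + (h / 2) • b y + v - (x + h • b x + (u + v)) = (h / 2) • (b y - b x) := by
  subst hy
  module

lemma norm_two_half_steps_sub_full_step_le {b : E → E} {L : ℝ} (hL : 0 ≤ L)
    (hlip : ∀ x y, ‖b x - b y‖ ≤ L * ‖x - y‖) {h : ℝ} (hh : 0 ≤ h) {x y : E} (u v : E)
    (hy : y = x + (h / 2) • b x + u) :
    ‖y + (h / 2) • b y + v - (x + h • b x + (u + v))‖ ≤ h / 2 * L * (h / 2 * ‖b x‖ + ‖u‖) := by
  have hstep : ‖y - x‖ ≤ h / 2 * ‖b x‖ + ‖u‖ := by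
    rw [hy, add_sub_right_comm, add_sub_cancel_left]
    refine (norm_add_le _ _).trans ?_
    rw [norm_smul, Real.norm_of_nonneg (by linarith)]
  rw [two_half_steps_sub_full_step b h u v hy, norm_smul, Real.norm_of_nonneg (by linarith),
    mul_assoc]
  gcongr
  exact (hlip y x).trans (by gcongr)

end EulerStep

theorem euler_coupling_one_step_weak_error_general
    {Ω : Type*} [MeasurableSpace Ω] (P : Measure Ω) [IsProbabilityMeasure P]
    {d : ℕ}
    (b : EuclideanSpace ℝ (Fin d) → EuclideanSpace ℝ (Fin d))
    (L : ℝ) (hL : 0 < L)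
    (hlip : ∀ x y : EuclideanSpace ℝ (Fin d), ‖b x - b y‖ ≤ L * ‖x - y‖)
    (h : ℝ) (hh : 0 < h) (x : EuclideanSpace ℝ (Fin d))
    (ξ₁ ξ₂ : Ω → EuclideanSpace ℝ (Fin d))
    (hξ₁_int : Integrable ξ₁ P)
    (hξ₁_sq_int : Integrable (fun ω => ‖ξ₁ ω‖ ^ 2) P)
    (hξ₁_var : (∫ ω, ‖ξ₁ ω‖ ^ 2 ∂P) = d)
    (xhalf xf xc : Ω → EuclideanSpace ℝ (Fin d))
    (hxhalf : ∀ ω, xhalf ω = x + (h / 2) • b x + Real.sqrt h • ξ₁ ω)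
    (hxf : ∀ ω, xf ω = xhalf ω + (h / 2) • b (xhalf ω) + Real.sqrt h • ξ₂ ω)
    (hxc : ∀ ω, xc ω = x + h • b x + Real.sqrt h • (ξ₁ ω + ξ₂ ω)) :
    ‖∫ ω, (xf ω - xc ω) ∂P‖ ≤
      (h ^ ((3:ℝ)/2) / 2) * L *
        ((Real.sqrt h / 2) * (L * ‖x‖ + ‖b 0‖) + Real.sqrt d) := by
  have hpt : ∀ ω, ‖xf ω - xc ω‖ ≤ h / 2 * L * (h / 2 * ‖b x‖ + √h * ‖ξ₁ ω‖) := by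
    intro ω
    rw [hxf, hxc, smul_add, ← norm_smul_of_nonneg (Real.sqrt_nonneg h)]
    exact norm_two_half_steps_sub_full_step_le hL.le hlip hh.le _ _ (hxhalf ω)
  have hmean : ∫ ω, ‖ξ₁ ω‖ ∂P ≤ √d := by
    simpa [hξ₁_var] using integral_norm_le_sqrt_integral_norm_sq hξ₁_int.1 hξ₁_sq_int
  have hbound_int : Integrable (fun ω => h / 2 * L * (h / 2 * ‖b x‖ + √h * ‖ξ₁ ω‖)) P :=
    ((integrable_const _).add (hξ₁_int.norm.const_mul _)).const_mul _
  have hint : ∫ ω, h / 2 * L * (h / 2 * ‖b x‖ + √h * ‖ξ₁ ω‖) ∂P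
      = h / 2 * L * (h / 2 * ‖b x‖ + √h * ∫ ω, ‖ξ₁ ω‖ ∂P) := by
    rw [integral_const_mul, integral_add (integrable_const _) (hξ₁_int.norm.const_mul _),
      integral_const, integral_const_mul, probReal_univ, one_smul]
  have hrpow : h ^ ((3:ℝ)/2) = h * √h := by
    rw [show (3:ℝ)/2 = 1 + 1/2 by norm_num, Real.rpow_add hh, Real.rpow_one, ← Real.sqrt_eq_rpow]
  calc ‖∫ ω, (xf ω - xc ω) ∂P‖
      ≤ h / 2 * L * (h / 2 * ‖b x‖ + √h * ∫ ω, ‖ξ₁ ω‖ ∂P) :=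
        hint ▸ norm_integral_le_of_norm_le hbound_int (.of_forall hpt)
    _ ≤ h / 2 * L * (h / 2 * (L * ‖x‖ + ‖b 0‖) + √h * √d) := by
        gcongr
        exact norm_apply_le_of_lipschitz hlip x
    _ = (h ^ ((3:ℝ)/2) / 2) * L * ((√h / 2) * (L * ‖x‖ + ‖b 0‖) + √d) := by
        rw [hrpow]
        linear_combination (-L * h * (L * ‖x‖ + ‖b 0‖) / 4) * Real.mul_self_sqrt hh.le

/-- One-step weak error estimate for the coupled fine/coarse Euler–Maruyama
steps: two half-steps versus one full step driven by the same noise. -/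
theorem euler_coupling_one_step_weak_error
    {Ω : Type*} [MeasurableSpace Ω] (P : Measure Ω) [IsProbabilityMeasure P]
    {d : ℕ} (hd : 1 ≤ d)
    (b : EuclideanSpace ℝ (Fin d) → EuclideanSpace ℝ (Fin d))
    (L : ℝ) (hL : 0 < L)
    (hlip : ∀ x y : EuclideanSpace ℝ (Fin d), ‖b x - b y‖ ≤ L * ‖x - y‖)
    (h : ℝ) (hh : 0 < h) (x : EuclideanSpace ℝ (Fin d))
    (ξ₁ ξ₂ : Ω → EuclideanSpace ℝ (Fin d))
    (hξ₁_meas : Measurable ξ₁) (hξ₂_meas : Measurable ξ₂)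
    (hξ₁_int : Integrable ξ₁ P) (hξ₂_int : Integrable ξ₂ P)
    (hξ₁_sq_int : Integrable (fun ω => ‖ξ₁ ω‖ ^ 2) P)
    (hξ₁_mean : (∫ ω, ξ₁ ω ∂P) = 0)
    (hξ₁_var : (∫ ω, ‖ξ₁ ω‖ ^ 2 ∂P) = d)
    (xhalf xf xc : Ω → EuclideanSpace ℝ (Fin d))
    (hxhalf : ∀ ω, xhalf ω = x + (h / 2) • b x + Real.sqrt h • ξ₁ ω)
    (hxf : ∀ ω, xf ω = xhalf ω + (h / 2) • b (xhalf ω) + Real.sqrt h • ξ₂ ω)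
    (hxc : ∀ ω, xc ω = x + h • b x + Real.sqrt h • (ξ₁ ω + ξ₂ ω)) :
    ‖∫ ω, (xf ω - xc ω) ∂P‖ ≤
      (h ^ ((3:ℝ)/2) / 2) * L *
        ((Real.sqrt h / 2) * (L * ‖x‖ + ‖b 0‖) + Real.sqrt d) :=
  euler_coupling_one_step_weak_error_general P b L hL hlip h hh x ξ₁ ξ₂ hξ₁_int hξ₁_sq_int hξ₁_var
    xhalf xf xc hxhalf hxf hxc
end

section
/- Let d ≥ 1 and let b : ℝ^d → ℝ^d satisfy ⟨b(z), z⟩ ≤ −(m/2)‖z‖² + c₀ for all z ∈ ℝ^d, with m > 0 and c₀ ≥ 0. Let h > 0, x ∈ ℝ^d, let ξ be a square-integrable ℝ^d-valued random vector with E[ξ] = 0 and E‖ξ‖² = d, and let X be a square-integrable ℝ^d-valued random vector satisfying X = x + h b(X) + √(2h) ξ almost surely. Then E‖X‖² ≤ (‖x‖² + 2hd + 2hc₀)/(1 + mh). -/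
open MeasureTheory
open scoped RealInnerProductSpace

/-!
Write the scheme as `X = v + h • b X` with `v = x + √(2h) • ξ`. Pairing with `X` gives
`‖X‖² = ⟪v, X⟫ + h ⟪b X, X⟫ ≤ (‖v‖² + ‖X‖²) / 2 - (m h / 2) ‖X‖² + h c₀`, i.e.
`(1 + m h) ‖X‖² ≤ ‖v‖² + 2 h c₀` pointwise. Taking expectations, the cross term
`2 √(2h) ⟪x, E ξ⟫` vanishes, so `E ‖v‖² = ‖x‖² + 2 h d`.
-/

section

variable {E : Type*} [NormedAddCommGroup E] [InnerProductSpace ℝ E]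

theorem one_add_mul_mul_norm_sq_le_of_eq_add_smul {m c₀ h : ℝ} {v w y : E} (hh : 0 ≤ h)
    (hdiss : ⟪w, y⟫ ≤ -(m / 2) * ‖y‖ ^ 2 + c₀) (hy : y = v + h • w) :
    (1 + m * h) * ‖y‖ ^ 2 ≤ ‖v‖ ^ 2 + 2 * h * c₀ := by
  have hsplit : ‖y‖ ^ 2 = ⟪v, y⟫ + h * ⟪w, y⟫ := by
    rw [← real_inner_self_eq_norm_sq]
    nth_rewrite 1 [hy]
    rw [inner_add_left, real_inner_smul_left]
  have hvy : ⟪v, y⟫ ≤ (‖v‖ ^ 2 + ‖y‖ ^ 2) / 2 := by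
    nlinarith [real_inner_le_norm v y, sq_nonneg (‖v‖ - ‖y‖)]
  nlinarith [mul_le_mul_of_nonneg_left hdiss hh]

theorem norm_add_smul_sq (x ξ : E) (s : ℝ) :
    ‖x + s • ξ‖ ^ 2 = ‖x‖ ^ 2 + 2 * s * ⟪x, ξ⟫ + s ^ 2 * ‖ξ‖ ^ 2 := by
  rw [norm_add_sq_real, real_inner_smul_right, norm_smul, mul_pow, Real.norm_eq_abs, sq_abs]
  ring

variable {Ω : Type*} [MeasurableSpace Ω] {P : Measure Ω} {ξ : Ω → E}

theorem integrable_norm_add_smul_sq [IsFiniteMeasure P] (hξ : Integrable ξ P)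
    (hξ_sq : Integrable (fun ω => ‖ξ ω‖ ^ 2) P) (x : E) (s : ℝ) :
    Integrable (fun ω => ‖x + s • ξ ω‖ ^ 2) P := by
  simp_rw [norm_add_smul_sq]
  exact ((integrable_const _).add ((hξ.const_inner x).const_mul _)).add (hξ_sq.const_mul _)

theorem integral_norm_add_smul_sq [CompleteSpace E] [IsProbabilityMeasure P]
    (hξ : Integrable ξ P) (hξ_sq : Integrable (fun ω => ‖ξ ω‖ ^ 2) P)
    (hξ_mean : ∫ ω, ξ ω ∂P = 0) (x : E) (s : ℝ) :
    ∫ ω, ‖x + s • ξ ω‖ ^ 2 ∂P = ‖x‖ ^ 2 + s ^ 2 * ∫ ω, ‖ξ ω‖ ^ 2 ∂P := by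
  have hcross_int : Integrable (fun ω => 2 * s * ⟪x, ξ ω⟫) P := (hξ.const_inner x).const_mul _
  have hcross : ∫ ω, 2 * s * ⟪x, ξ ω⟫ ∂P = 0 := by
    rw [integral_const_mul, integral_inner hξ x, hξ_mean, inner_zero_right, mul_zero]
  simp_rw [norm_add_smul_sq]
  rw [integral_add (f := fun ω => ‖x‖ ^ 2 + 2 * s * ⟪x, ξ ω⟫)
      ((integrable_const _).add hcross_int) (hξ_sq.const_mul _),
    integral_add (integrable_const _) hcross_int, hcross, integral_const, integral_const_mul,
    probReal_univ, one_smul, add_zero]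

end

theorem implicit_euler_one_step_moment_bound_general
    {Ω : Type*} [MeasurableSpace Ω] (P : Measure Ω) [IsProbabilityMeasure P]
    {d : ℕ}
    (b : EuclideanSpace ℝ (Fin d) → EuclideanSpace ℝ (Fin d))
    (m c₀ : ℝ) (hm : 0 < m)
    (hdiss : ∀ z : EuclideanSpace ℝ (Fin d), ⟪b z, z⟫ ≤ -(m / 2) * ‖z‖ ^ 2 + c₀)
    (h : ℝ) (hh : 0 < h)
    (x : EuclideanSpace ℝ (Fin d))
    (ξ : Ω → EuclideanSpace ℝ (Fin d))
    (hξ_int : Integrable ξ P)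
    (hξ_sq_int : Integrable (fun ω => ‖ξ ω‖ ^ 2) P)
    (hξ_mean : (∫ ω, ξ ω ∂P) = 0)
    (hξ_var : (∫ ω, ‖ξ ω‖ ^ 2 ∂P) = d)
    (X : Ω → EuclideanSpace ℝ (Fin d))
    (hX_sq_int : Integrable (fun ω => ‖X ω‖ ^ 2) P)
    (hX : ∀ᵐ ω ∂P, X ω = x + h • b (X ω) + Real.sqrt (2 * h) • ξ ω) :
    (∫ ω, ‖X ω‖ ^ 2 ∂P) ≤
      (‖x‖ ^ 2 + 2 * h * d + 2 * h * c₀) / (1 + m * h) := by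
  set s := Real.sqrt (2 * h)
  have hs : s ^ 2 = 2 * h := Real.sq_sqrt (by positivity)
  have hbound : ∀ᵐ ω ∂P, (1 + m * h) * ‖X ω‖ ^ 2 ≤ ‖x + s • ξ ω‖ ^ 2 + 2 * h * c₀ := by
    filter_upwards [hX] with ω hω
    exact one_add_mul_mul_norm_sq_le_of_eq_add_smul hh.le (hdiss _)
      (hω.trans (add_right_comm _ _ _))
  have hsq := integrable_norm_add_smul_sq hξ_int hξ_sq_int x s
  have hmoment : (1 + m * h) * ∫ ω, ‖X ω‖ ^ 2 ∂P ≤ ∫ ω, ‖x + s • ξ ω‖ ^ 2 + 2 * h * c₀ ∂P := by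
    rw [← integral_const_mul]
    exact integral_mono_ae (hX_sq_int.const_mul _) (hsq.add (integrable_const _)) hbound
  rw [integral_add hsq (integrable_const _), integral_norm_add_smul_sq hξ_int hξ_sq_int hξ_mean,
    hξ_var, hs, integral_const, probReal_univ, one_smul] at hmoment
  rw [le_div_iff₀ (by positivity)]
  linarith

/-- One-step second-moment bound for the implicit (backward) Euler scheme
under a dissipativity condition on the drift. -/
theorem implicit_euler_one_step_moment_bound
    {Ω : Type*} [MeasurableSpace Ω] (P : Measure Ω) [IsProbabilityMeasure P]
    {d : ℕ} (hd : 1 ≤ d)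
    (b : EuclideanSpace ℝ (Fin d) → EuclideanSpace ℝ (Fin d))
    (m c₀ : ℝ) (hm : 0 < m) (hc₀ : 0 ≤ c₀)
    (hdiss : ∀ z : EuclideanSpace ℝ (Fin d), ⟪b z, z⟫ ≤ -(m / 2) * ‖z‖ ^ 2 + c₀)
    (h : ℝ) (hh : 0 < h)
    (x : EuclideanSpace ℝ (Fin d))
    (ξ : Ω → EuclideanSpace ℝ (Fin d))
    (hξ_meas : Measurable ξ)
    (hξ_int : Integrable ξ P)
    (hξ_sq_int : Integrable (fun ω => ‖ξ ω‖ ^ 2) P)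
    (hξ_mean : (∫ ω, ξ ω ∂P) = 0)
    (hξ_var : (∫ ω, ‖ξ ω‖ ^ 2 ∂P) = d)
    (X : Ω → EuclideanSpace ℝ (Fin d))
    (hX_meas : Measurable X)
    (hX_sq_int : Integrable (fun ω => ‖X ω‖ ^ 2) P)
    (hX : ∀ᵐ ω ∂P, X ω = x + h • b (X ω) + Real.sqrt (2 * h) • ξ ω) :
    (∫ ω, ‖X ω‖ ^ 2 ∂P) ≤
      (‖x‖ ^ 2 + 2 * h * d + 2 * h * c₀) / (1 + m * h) :=
  implicit_euler_one_step_moment_bound_general P b m c₀ hm hdiss h hh x ξ hξ_int hξ_sq_int hξ_mean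
    hξ_var X hX_sq_int hX
end
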